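/- The intersection-connexity (no-backtrack) inequalities are valid: in an optimal solution of the Steiner TSP, for every Steiner vertex i (non-required, not the depot) and every neighbor j of i, if the arc (ij) is used then some arc (ki) with k ≠ j is also used; that is, x_{ij} ≤ ∑_{k∈Γ(i)\{j}} x_{ki}. Equivalently, an optimal closed walk never enters a non-required vertex from j and immediately returns to j without cost-free reason: if a solution uses both (ji) and (ij) and no other arc at i, deleting both yields a cheaper or equal feasible solution. -/
import Mathlib


/-- The list of consecutive steps (arcs) of a walk given as a list of vertices. -/
def walkSteps {V : Type*} (w : List V) : List (V × V) := w.zip w.tail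

/-- Number of times the closed walk `w` uses the arc `(u, v)`. -/
def arcUsage {V : Type*} [DecidableEq V] (w : List V) (u v : V) : ℕ :=
  (walkSteps w).count (u, v)

/-- `w` is a closed walk from the depot, along arcs of `A`, visiting every required vertex. -/
def IsPickingTour {V : Type*} (A : V → V → Prop) (R : Finset V) (depot : V)
    (w : List V) : Prop :=
  w.head? = some depot ∧ w.getLast? = some depot ∧
    (∀ p ∈ walkSteps w, A p.1 p.2) ∧ (∀ r ∈ R, r ∈ w)

/-- `x` is a feasible Steiner-TSP solution: the arc-usage vector of some picking tour. -/
def FeasibleSol {V : Type*} [DecidableEq V] (A : V → V → Prop) (R : Finset V) (depot : V)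
    (x : V → V → ℕ) : Prop :=
  ∃ w : List V, IsPickingTour A R depot w ∧ ∀ u v, arcUsage w u v = x u v

/-- Cost of a solution. -/
def solCost {V : Type*} [Fintype V] (d : V → V → ℝ) (x : V → V → ℕ) : ℝ :=
  ∑ u, ∑ v, d u v * (x u v : ℝ)

lemma walkSteps_cons_cons {V : Type*} (u v : V) (t : List V) :
    walkSteps (u :: v :: t) = (u, v) :: walkSteps (v :: t) := rfl

lemma walkSteps_append_cons {V : Type*} (a : List V) (c : V) (l : List V) :
    walkSteps (a ++ c :: l) = walkSteps (a ++ [c]) ++ walkSteps (c :: l) := by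
  induction a with
  | nil => simp [walkSteps]
  | cons u a' ih =>
    cases a' with
    | nil => simp [walkSteps_cons_cons, walkSteps]
    | cons v a'' =>
      simp only [List.cons_append, walkSteps_cons_cons] at *
      rw [ih]

lemma count_decomp {V : Type*} [DecidableEq V] (a b : List V) (i j : V) (p : V × V) :
    (walkSteps (a ++ j :: i :: j :: b)).count p
      = (walkSteps (a ++ j :: b)).count p + ([(j, i), (i, j)] : List (V × V)).count p := by
  rw [walkSteps_append_cons a j (i :: j :: b), walkSteps_append_cons a j b]
  rw [show walkSteps (j :: i :: j :: b) = (j, i) :: (i, j) :: walkSteps (j :: b) from rfl]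
  simp only [List.count_append, List.count_cons, List.count_nil]
  omega

lemma key_count {V : Type*} [Fintype V] [DecidableEq V] (i j : V) :
    ∀ (w : List V), (∀ a b, w ≠ a ++ j :: i :: j :: b) →
    (walkSteps w).count (i, j) ≤
      (∑ k ∈ Finset.univ.erase j, (walkSteps w).count (k, i)) +
      (if w.head? = some i ∧ w.tail.head? = some j then 1 else 0) := by
  intro w
  induction w with
  | nil => simp [walkSteps]
  | cons u t ih =>
    intro hpat
    cases t with
    | nil => simp [walkSteps]
    | cons v t' =>
      have hpat' : ∀ a b, v :: t' ≠ a ++ j :: i :: j :: b := by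
        intro a b h
        exact hpat (u :: a) b (by simp [h])
      have IH := ih hpat'
      rw [walkSteps_cons_cons]
      simp only [List.count_cons, beq_iff_eq, List.head?_cons, List.tail_cons,
        Option.some.injEq] at IH ⊢
      rw [Finset.sum_add_distrib]
      have hsum : (∑ k ∈ Finset.univ.erase j, if (u, v) = (k, i) then 1 else 0)
          = if v = i ∧ u ≠ j then 1 else 0 := by
        by_cases hvi : v = i
        · subst hvi
          simp only [Prod.mk.injEq]
          simp [Finset.sum_ite_eq, Finset.mem_erase]
        · rw [if_neg (by tauto)]
          refine Finset.sum_eq_zero fun k _ => if_neg ?_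
          simp only [Prod.mk.injEq]
          tauto
      rw [hsum]
      by_cases h1 : (u, v) = (i, j)
      · obtain ⟨hu, hv⟩ := Prod.mk.injEq .. ▸ h1
        have hP : ¬(v = i ∧ t'.head? = some j) := by
          rintro ⟨hvi, hth⟩
          cases t' with
          | nil => simp at hth
          | cons c t'' =>
            simp only [List.head?_cons, Option.some.injEq] at hth
            have hij : i = j := hvi.symm.trans hv
            exact hpat [] t'' (by simp [hu.trans hij, hvi, hth])
        rw [if_neg hP] at IH
        rw [if_pos h1, if_pos (show u = i ∧ v = j from ⟨hu, hv⟩)]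
        split_ifs <;> omega
      · rw [if_neg h1, if_neg (show ¬(u = i ∧ v = j) from fun ⟨h, h'⟩ => h1 (by rw [h, h']))]
        by_cases hQ : v = i ∧ t'.head? = some j
        · rw [if_pos hQ] at IH
          have huj : u ≠ j := by
            rintro rfl
            obtain ⟨hvi, hth⟩ := hQ
            cases t' with
            | nil => simp at hth
            | cons c t'' =>
              simp only [List.head?_cons, Option.some.injEq] at hth
              exact hpat [] t'' (by simp [hth, hvi])
          rw [if_pos ⟨hQ.1, huj⟩]
          omega
        · rw [if_neg hQ] at IH
          split_ifs <;> omega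
/-- The intersection-connexity (no-backtrack) inequalities are valid: in an optimal
Steiner TSP solution, for every Steiner vertex `i` (not required) and every vertex `j`,
`x_{ij} ≤ ∑_{k ≠ j} x_{ki}`: if the arc `(i,j)` is used, some arc `(k,i)` with `k ≠ j`
is also used. -/
theorem no_backtrack_valid_at_steiner_vertices
    {V : Type*} [Fintype V] [DecidableEq V]
    (A : V → V → Prop) (hAsym : ∀ u v, A u v → A v u)
    (d : V → V → ℝ) (hdsym : ∀ u v, d u v = d v u) (hdpos : ∀ u v, A u v → 0 < d u v)
    (R : Finset V) (depot : V) (hdep : depot ∈ R)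
    (x : V → V → ℕ)
    (hfeas : FeasibleSol A R depot x)
    (hopt : ∀ x', FeasibleSol A R depot x' → solCost d x ≤ solCost d x') :
    ∀ i : V, i ∉ R → ∀ j : V, x i j ≤ ∑ k ∈ Finset.univ.erase j, x k i := by
  intro i hiR j
  by_contra hlt
  push_neg at hlt
  obtain ⟨w, ⟨hhead, hlast, harc, hreq⟩, hx⟩ := hfeas
  have hid : i ≠ depot := fun h => hiR (h ▸ hdep)
  by_cases hpat : ∀ a b, w ≠ a ++ j :: i :: j :: b
  · simp only [arcUsage] at hx
    have hk := key_count i j w hpat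
    have hpen : ¬(w.head? = some i ∧ w.tail.head? = some j) := by
      rintro ⟨h1, -⟩
      rw [hhead] at h1
      exact hid (Option.some.inj h1).symm
    rw [if_neg hpen] at hk
    rw [hx i j] at hk
    rw [Finset.sum_congr rfl (fun k _ => hx k i)] at hk
    omega
  · push_neg at hpat
    obtain ⟨a, b, rfl⟩ := hpat
    have hhead' : (a ++ j :: b).head? = some depot := by
      rwa [show (a ++ j :: i :: j :: b).head? = (a ++ j :: b).head? by cases a <;> simp]
        at hhead
    have hlast' : (a ++ j :: b).getLast? = some depot := by
      rw [List.getLast?_append_cons]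
      rw [List.getLast?_append_cons,
        show (j :: i :: j :: b) = [j, i] ++ j :: b from rfl,
        List.getLast?_append_cons] at hlast
      exact hlast
    have harc' : ∀ p ∈ walkSteps (a ++ j :: b), A p.1 p.2 := by
      intro p hp
      apply harc p
      rw [← List.count_pos_iff] at hp ⊢
      rw [count_decomp a b i j p]
      omega
    have hreq' : ∀ r ∈ R, r ∈ a ++ j :: b := by
      intro r hr
      have hrm := hreq r hr
      have hri : r ≠ i := fun h => hiR (h ▸ hr)
      simp only [List.mem_append, List.mem_cons] at hrm ⊢
      tauto
    have hAij : A i j := by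
      apply harc (i, j)
      rw [walkSteps_append_cons a j (i :: j :: b),
        show walkSteps (j :: i :: j :: b) = (j, i) :: (i, j) :: walkSteps (j :: b) from rfl]
      simp
    have hfeas' : FeasibleSol A R depot (fun u v => arcUsage (a ++ j :: b) u v) :=
      ⟨a ++ j :: b, ⟨hhead', hlast', harc', hreq'⟩, fun u v => rfl⟩
    have hterm : ∀ u v : V, 0 ≤ d u v * ((([(j, i), (i, j)] : List (V × V)).count (u, v) : ℝ)) := by
      intro u v
      by_cases h : (u, v) ∈ ([(j, i), (i, j)] : List (V × V))
      · have hA : A u v := by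
          simp only [List.mem_cons, List.not_mem_nil, or_false, Prod.mk.injEq] at h
          rcases h with ⟨h1, h2⟩ | ⟨h1, h2⟩
          · rw [h1, h2]; exact hAsym _ _ hAij
          · rw [h1, h2]; exact hAij
        exact mul_nonneg (hdpos u v hA).le (Nat.cast_nonneg _)
      · rw [List.count_eq_zero.2 h]; simp
    have hsplit : solCost d x = solCost d (fun u v => arcUsage (a ++ j :: b) u v) +
        ∑ u, ∑ v, d u v * ((([(j, i), (i, j)] : List (V × V)).count (u, v) : ℝ)) := by
      unfold solCost
      rw [← Finset.sum_add_distrib]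
      refine Finset.sum_congr rfl fun u _ => ?_
      rw [← Finset.sum_add_distrib]
      refine Finset.sum_congr rfl fun v _ => ?_
      rw [← hx u v]
      show d u v * ((arcUsage (a ++ j :: i :: j :: b) u v : ℕ) : ℝ) = _
      unfold arcUsage
      rw [count_decomp a b i j (u, v)]
      push_cast
      ring
    have hpos : 0 < ∑ u, ∑ v, d u v * ((([(j, i), (i, j)] : List (V × V)).count (u, v) : ℝ)) := by
      refine Finset.sum_pos' (fun u _ => Finset.sum_nonneg fun v _ => hterm u v)
        ⟨i, Finset.mem_univ i, ?_⟩
      refine Finset.sum_pos' (fun v _ => hterm i v) ⟨j, Finset.mem_univ j, ?_⟩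
      have hc : 1 ≤ (([(j, i), (i, j)] : List (V × V)).count (i, j) : ℝ) := by
        have : 1 ≤ ([(j, i), (i, j)] : List (V × V)).count (i, j) := by
          simp [List.count_cons]
        exact_mod_cast this
      have hd := hdpos i j hAij
      calc (0 : ℝ) < d i j := hd
        _ = d i j * 1 := by ring
        _ ≤ d i j * (([(j, i), (i, j)] : List (V × V)).count (i, j) : ℝ) :=
            mul_le_mul_of_nonneg_left hc hd.le
    have hle := hopt _ hfeas'
    linarith
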